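/- Let m be an odd positive integer and D a positive integer with D ≡ 0 or 3 (mod 4). Then the series of Salié sums Σ_{c > 0, c ≡ 0 (mod 16)} S_{4D}(m, c) · sinh(8πm√D / c) converges to 0; that is, the partial sums Σ_{0 < c ≤ X, 16 | c} S_{4D}(m, c) · sinh(4πm√(4D)/c) tend to 0 as X → ∞. -/

import Mathlib

/-!
Every term of the series vanishes. For `16 ∣ c` every solution of `x² ≡ -4D (mod c)` is even,
so the shift `x ↦ x + c/4` permutes the solutions, while it multiplies `e(2mx/c)` by
`e(m/2) = -1` for odd `m`. Hence `S_{4D}(m, c) = -S_{4D}(m, c) = 0`.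
-/

open Filter Topology

/-- The Salié-type exponential sum `S_Δ(m, c) = Σ_{x (mod c), x² ≡ −Δ (mod c)} e(2mx/c)`. -/
noncomputable def salie (Δ m c : ℕ) : ℂ :=
  ∑ x ∈ Finset.filter (fun x => c ∣ (x ^ 2 + Δ)) (Finset.range c),
    Complex.exp (2 * Real.pi * Complex.I * (2 * m * x) / c)

open Finset Function Complex

theorem Function.Periodic.sum_range_comp_add {M : Type*} [AddCancelCommMonoid M] {f : ℕ → M}
    {c : ℕ} (hf : Periodic f c) (a : ℕ) : ∑ x ∈ range c, f (x + a) = ∑ x ∈ range c, f x := by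
  induction a with
  | zero => rfl
  | succ a ih =>
    have h := (sum_range_succ (fun x => f (x + a)) c).symm.trans
      (sum_range_succ' (fun x => f (x + a)) c)
    rw [add_comm c a, hf a, zero_add] at h
    simpa only [add_right_comm _ 1 a, add_assoc, ih] using (add_left_injective _ h).symm

theorem Function.Periodic.sum_range_eq_zero_of_antiperiodic {M : Type*} [AddCommGroup M]
    [IsAddTorsionFree M] {f : ℕ → M} {c a : ℕ} (hc : Periodic f c) (ha : Antiperiodic f a) :
    ∑ x ∈ range c, f x = 0 := by
  have h := hc.sum_range_comp_add a
  simp only [ha _, sum_neg_distrib] at h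
  exact self_eq_neg.mp h.symm

theorem dvd_add_sq_add_iff {c x a : ℕ} (Δ : ℕ) (hc : c ∣ 2 * x * a + a ^ 2) :
    c ∣ (x + a) ^ 2 + Δ ↔ c ∣ x ^ 2 + Δ := by
  rw [show (x + a) ^ 2 + Δ = x ^ 2 + Δ + (2 * x * a + a ^ 2) by ring]
  exact Nat.dvd_add_left hc

theorem sixteen_mul_dvd_add_sq_add_iff {Δ : ℕ} (hΔ : Even Δ) (k x : ℕ) :
    16 * k ∣ (x + 4 * k) ^ 2 + Δ ↔ 16 * k ∣ x ^ 2 + Δ := by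
  rcases Nat.even_or_odd x with ⟨y, rfl⟩ | hx
  · exact dvd_add_sq_add_iff Δ ⟨y + k, by ring⟩
  · have hodd : ∀ z, Odd z → ¬ 16 * k ∣ z ^ 2 + Δ := fun z hz h =>
      (hz.pow.add_even hΔ).not_two_dvd_nat (dvd_trans ⟨8 * k, by ring⟩ h)
    exact iff_of_false (hodd _ (hx.add_even ⟨2 * k, by ring⟩)) (hodd _ hx)

noncomputable def salieTerm (Δ m c x : ℕ) : ℂ :=
  if c ∣ x ^ 2 + Δ then exp (2 * Real.pi * I * (2 * m * x) / c) else 0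

theorem salie_eq_sum_range_salieTerm (Δ m c : ℕ) :
    salie Δ m c = ∑ x ∈ range c, salieTerm Δ m c x :=
  sum_filter _ _

theorem salieTerm_periodic (Δ m c : ℕ) : Periodic (salieTerm Δ m c) c := by
  intro x
  rcases eq_or_ne c 0 with rfl | hc
  · rfl
  have hexp : exp (2 * Real.pi * I * (2 * m * ↑(x + c)) / c) =
      exp (2 * Real.pi * I * (2 * m * x) / c) := by
    rw [show 2 * Real.pi * I * (2 * m * ↑(x + c)) / c =
        2 * Real.pi * I * (2 * m * x) / c + (2 * m : ℕ) * (2 * Real.pi * I) by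
      push_cast; field_simp]
    rw [exp_add, exp_nat_mul_two_pi_mul_I, mul_one]
  simp only [salieTerm, dvd_add_sq_add_iff Δ (⟨2 * x + c, by ring⟩ : c ∣ 2 * x * c + c ^ 2), hexp]

theorem salieTerm_antiperiodic {Δ m k : ℕ} (hΔ : Even Δ) (hm : Odd m) (hk : k ≠ 0) :
    Antiperiodic (salieTerm Δ m (16 * k)) (4 * k) := by
  intro x
  have hexp : exp (2 * Real.pi * I * (2 * m * ↑(x + 4 * k)) / ↑(16 * k)) =
      -exp (2 * Real.pi * I * (2 * m * x) / ↑(16 * k)) := by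
    rw [show 2 * Real.pi * I * (2 * m * ↑(x + 4 * k)) / ↑(16 * k) =
        2 * Real.pi * I * (2 * m * x) / ↑(16 * k) + m * (Real.pi * I) by
      push_cast; field_simp; ring]
    rw [exp_add, exp_nat_mul, exp_pi_mul_I, hm.neg_one_pow, mul_neg_one]
  simp only [salieTerm, sixteen_mul_dvd_add_sq_add_iff hΔ, hexp]
  split_ifs <;> simp

theorem salie_sixteen_mul_eq_zero {Δ m : ℕ} (hΔ : Even Δ) (hm : Odd m) (k : ℕ) :
    salie Δ m (16 * k) = 0 := by
  rcases eq_or_ne k 0 with rfl | hk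
  · rfl
  rw [salie_eq_sum_range_salieTerm]
  exact (salieTerm_periodic Δ m _).sum_range_eq_zero_of_antiperiodic
    (salieTerm_antiperiodic hΔ hm hk)

theorem salie_series_tendsto_zero_general (m : ℕ) (hmodd : Odd m)
    (D : ℕ) :
    Tendsto (fun X : ℕ =>
        ∑ c ∈ Finset.filter (fun c => 0 < c ∧ 16 ∣ c) (Finset.range (X + 1)),
          salie (4 * D) m c * (Real.sinh (4 * Real.pi * m * Real.sqrt (4 * D) / c) : ℂ))
      atTop (nhds 0) := by
  refine tendsto_const_nhds.congr fun X => (sum_eq_zero fun c hc => ?_).symm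
  obtain ⟨k, rfl⟩ := (mem_filter.1 hc).2.2
  rw [salie_sixteen_mul_eq_zero ⟨2 * D, by ring⟩ hmodd, zero_mul]

theorem salie_series_tendsto_zero (m : ℕ) (hm : 0 < m) (hmodd : Odd m)
    (D : ℕ) (hD : 0 < D) (hmod : D % 4 = 0 ∨ D % 4 = 3) :
    Tendsto (fun X : ℕ =>
        ∑ c ∈ Finset.filter (fun c => 0 < c ∧ 16 ∣ c) (Finset.range (X + 1)),
          salie (4 * D) m c * (Real.sinh (4 * Real.pi * m * Real.sqrt (4 * D) / c) : ℂ))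
      atTop (nhds 0) :=
  salie_series_tendsto_zero_general m hmodd D
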